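/- arXiv:1303.1582 — 2 statements merged into one kernel-verified Lean document; each statement's English description precedes it below -/
import Mathlib

section
/- For every real z > 0 and every integer k ≥ 0, e^{1/z} - ∑_{m=0}^k 1/(m! z^m) = (1/(k! (k+1)!)) ∫_0^∞ F_k(u) u^k e^{-zu} du, where F_k(u) = ∑_{n=0}^∞ u^n n! / ((k+1)_n (k+2)_n n!) · 1 with (a)_n the Pochhammer symbol; explicitly F_k(u) = ∑_{n=0}^∞ u^n (1)_n / ((k+1)_n (k+2)_n n!). -/
/-!
Since `(1)_n = n!` and `(k+1)_n = (k+n)!/k!`, the integrand equals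
`k! (k+1)! ∑ₙ u^(k+n) e^(-zu) / ((k+n)! (k+n+1)!)`. All terms are nonnegative, so the series
may be integrated termwise, and `∫₀^∞ u^m e^(-zu) du = m!/z^(m+1)` turns it into
`∑_{j > k} z^(-j)/j!`, the tail of the exponential series at `1/z`.
-/

open MeasureTheory Set Real Nat

theorem ascPochhammer_eval_natCast_add_one {K : Type*} [Field K] [CharZero K] (k n : ℕ) :
    (ascPochhammer K n).eval ((k : K) + 1) = (k + n)! / k ! := by
  rw [← factorial_mul_ascPochhammer K k n,
    mul_div_cancel_left₀ _ (Nat.cast_ne_zero.2 k.factorial_ne_zero)]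

theorem hypergeometric_term_eq (k n : ℕ) (u : ℝ) :
    u ^ n * (ascPochhammer ℝ n).eval 1 /
        ((ascPochhammer ℝ n).eval ((k : ℝ) + 1) * (ascPochhammer ℝ n).eval ((k : ℝ) + 2) *
          n !)
      = k ! * (k + 1)! * (u ^ n / ((k + n)! * (k + 1 + n)!)) := by
  have h := ascPochhammer_eval_natCast_add_one (K := ℝ) (k + 1) n
  rw [Nat.cast_succ, add_assoc, one_add_one_eq_two] at h
  rw [ascPochhammer_eval_one, ascPochhammer_eval_natCast_add_one, h]
  field_simp

theorem Real.hasSum_pow_div_factorial_add (x : ℝ) (k : ℕ) :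
    HasSum (fun n : ℕ ↦ x ^ (n + k) / (n + k)!)
      (exp x - ∑ m ∈ Finset.range k, x ^ m / m !) :=
  (hasSum_nat_add_iff' k (f := fun n : ℕ ↦ x ^ n / n !)).2
    (Real.exp_eq_exp_ℝ ▸ NormedSpace.expSeries_div_hasSum_exp x)

theorem integral_pow_mul_exp_neg_mul_Ioi {z : ℝ} (hz : 0 < z) (m : ℕ) :
    ∫ u in Ioi 0, u ^ m * exp (-z * u) = m ! / z ^ (m + 1) := by
  have h := integral_rpow_mul_exp_neg_mul_Ioi (a := m + 1) (by positivity) hz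
  simp only [add_sub_cancel_right, Real.rpow_natCast, Real.Gamma_nat_eq_factorial] at h
  rw [← Nat.cast_succ, Real.rpow_natCast] at h
  simp only [neg_mul, h, div_pow, one_pow, one_div_mul_eq_div]

theorem integrableOn_pow_mul_exp_neg_mul_Ioi {z : ℝ} (hz : 0 < z) (m : ℕ) :
    IntegrableOn (fun u : ℝ ↦ u ^ m * exp (-z * u)) (Ioi 0) := by
  simpa [Real.rpow_natCast] using
    integrableOn_rpow_mul_exp_neg_mul_rpow (p := 1) (s := m)
      (neg_one_lt_zero.trans_le m.cast_nonneg) one_pos hz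

theorem integral_tsum_pow_mul_exp_neg_mul_Ioi {z : ℝ} (hz : 0 < z) (k : ℕ) :
    ∫ u in Ioi 0, ∑' n : ℕ, u ^ (k + n) * exp (-z * u) / ((k + n)! * (k + 1 + n)!)
      = exp (1 / z) - ∑ m ∈ Finset.range (k + 1), (1 / z) ^ m / m ! := by
  set G : ℕ → ℝ → ℝ := fun n u ↦ u ^ (k + n) * exp (-z * u) / ((k + n)! * (k + 1 + n)!)
  have hG_int n : Integrable (G n) (volume.restrict (Ioi 0)) :=
    (integrableOn_pow_mul_exp_neg_mul_Ioi hz (k + n)).div_const _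
  have hG_integral n : ∫ u in Ioi 0, G n u = (1 / z) ^ (n + (k + 1)) / (n + (k + 1))! := by
    simp only [G, integral_div, integral_pow_mul_exp_neg_mul_Ioi hz]
    rw [div_pow, one_pow, show n + (k + 1) = k + n + 1 by ring,
      show k + 1 + n = k + n + 1 by ring]
    field_simp
  have hG_norm n : ∫ u in Ioi 0, ‖G n u‖ = ∫ u in Ioi 0, G n u :=
    setIntegral_congr_fun measurableSet_Ioi fun u (hu : 0 < u) ↦
      Real.norm_of_nonneg (by positivity)
  have hsum : HasSum (fun n ↦ ∫ u in Ioi 0, G n u)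
      (exp (1 / z) - ∑ m ∈ Finset.range (k + 1), (1 / z) ^ m / m !) := by
    simpa only [← hG_integral] using Real.hasSum_pow_div_factorial_add (1 / z) (k + 1)
  refine (hasSum_integral_of_summable_integral_norm hG_int ?_).unique hsum
  simpa only [hG_norm] using hsum.summable

theorem stmt_12 : ∀ (z : ℝ), 0 < z → ∀ (k : ℕ),
    Real.exp (1 / z) - (∑ m ∈ Finset.range (k + 1), 1 / ((m.factorial : ℝ) * z ^ m))
      = (1 / ((k.factorial : ℝ) * ((k + 1).factorial : ℝ))) *
          ∫ u in Set.Ioi (0 : ℝ),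
            (∑' n : ℕ, u ^ n * (ascPochhammer ℝ n).eval (1 : ℝ) /
              ((ascPochhammer ℝ n).eval ((k : ℝ) + 1) *
                (ascPochhammer ℝ n).eval ((k : ℝ) + 2) * (n.factorial : ℝ)))
              * u ^ k * Real.exp (-z * u) := by
  intro z hz k
  have hintegrand (u : ℝ) :
      (∑' n : ℕ, u ^ n * (ascPochhammer ℝ n).eval (1 : ℝ) /
        ((ascPochhammer ℝ n).eval ((k : ℝ) + 1) *
          (ascPochhammer ℝ n).eval ((k : ℝ) + 2) * (n.factorial : ℝ))) * u ^ k * exp (-z * u)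
        = k ! * (k + 1)! *
          ∑' n : ℕ, u ^ (k + n) * exp (-z * u) / ((k + n)! * (k + 1 + n)!) := by
    simp only [hypergeometric_term_eq, tsum_mul_left]
    rw [mul_assoc, mul_assoc, ← tsum_mul_right]
    congr 2 with n
    ring
  have hterm (m : ℕ) : 1 / ((m ! : ℝ) * z ^ m) = (1 / z) ^ m / m ! := by
    rw [div_pow, one_pow, div_div, mul_comm]
  simp only [hintegrand, integral_const_mul, integral_tsum_pow_mul_exp_neg_mul_Ioi hz, hterm]
  field_simp
end

section
/- For every real u > 0, u/(1 - e^{-u}) ≤ ∑_{k=0}^∞ u^k/(k!(k+1)!), and therefore for every integer k ≥ 0 and t > 0, ∫_0^∞ [∑_{j=0}^∞ u^j/(j!(j+1)!) - u/(1 - e^{-u})] u^k e^{-tu} du ≥ 0. -/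
/-!
Since `(12 - 6u + u²) eᵘ - (12 + 6u + u²) = ∑_{n ≥ 5} (n - 3)(n - 4) uⁿ / n!` is nonnegative
for `u ≥ 0`, the `(2,2)` Padé approximant gives `u / (1 - e⁻ᵘ) ≤ 1 + u/2 + u²/12`. The right-hand
side is exactly the sum of the first three terms of `∑ uᵏ / (k! (k+1)!)`, whose terms are all
nonnegative. The integral statement follows because its integrand is then pointwise nonnegative.
-/

open Real Finset

lemma pade_two_two_mul_exp_ge {u : ℝ} (hu : 0 ≤ u) :
    12 + 6 * u + u ^ 2 ≤ (12 - 6 * u + u ^ 2) * exp u := by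
  have hexp := sum_le_exp_of_nonneg hu 7
  have htaylor : ∑ i ∈ range 7, u ^ i / i.factorial
      = 1 + u + u ^ 2 / 2 + u ^ 3 / 6 + u ^ 4 / 24 + u ^ 5 / 120 + u ^ 6 / 720 := by
    simp [sum_range_succ, Nat.factorial]
  rw [htaylor] at hexp
  have hpos : 0 < 12 - 6 * u + u ^ 2 := by nlinarith [sq_nonneg (u - 3)]
  nlinarith [mul_le_mul_of_nonneg_left hexp hpos.le, pow_nonneg hu 5, pow_nonneg hu 6,
    pow_nonneg hu 8]

lemma div_one_sub_exp_neg_le {u : ℝ} (hu : 0 < u) :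
    u / (1 - exp (-u)) ≤ 1 + u / 2 + u ^ 2 / 12 := by
  have hden : 0 < 1 - exp (-u) := sub_pos.mpr (exp_lt_one_iff.mpr (neg_lt_zero.mpr hu))
  have hpade : (12 + 6 * u + u ^ 2) * exp (-u) ≤ 12 - 6 * u + u ^ 2 := by
    rw [exp_neg, ← div_eq_mul_inv, div_le_iff₀ (exp_pos u)]
    exact pade_two_two_mul_exp_ge hu.le
  rw [div_le_iff₀ hden]
  nlinarith

lemma summable_pow_div_factorial_mul_factorial_succ (u : ℝ) :
    Summable fun k : ℕ => u ^ k / ((k.factorial : ℝ) * ((k + 1).factorial : ℝ)) := by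
  refine Summable.of_norm_bounded (Real.summable_pow_div_factorial |u|) fun k => ?_
  have hfac : (k.factorial : ℝ) ≤ k.factorial * (k + 1).factorial :=
    le_mul_of_one_le_right (by positivity)
      (by exact_mod_cast Nat.one_le_of_lt (Nat.factorial_pos _))
  rw [norm_div, norm_pow, Real.norm_eq_abs, Real.norm_of_nonneg (by positivity)]
  gcongr

lemma div_one_sub_exp_neg_le_tsum {u : ℝ} (hu : 0 < u) :
    u / (1 - exp (-u))
      ≤ ∑' k : ℕ, u ^ k / ((k.factorial : ℝ) * ((k + 1).factorial : ℝ)) := by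
  have hhead : ∑ k ∈ range 3, u ^ k / ((k.factorial : ℝ) * ((k + 1).factorial : ℝ))
      = 1 + u / 2 + u ^ 2 / 12 := by
    simp [sum_range_succ, Nat.factorial]
    ring
  calc u / (1 - exp (-u)) ≤ 1 + u / 2 + u ^ 2 / 12 := div_one_sub_exp_neg_le hu
    _ = ∑ k ∈ range 3, u ^ k / ((k.factorial : ℝ) * ((k + 1).factorial : ℝ)) := hhead.symm
    _ ≤ _ := (summable_pow_div_factorial_mul_factorial_succ u).sum_le_tsum _
      fun k _ => by positivity

theorem stmt_16 :
    (∀ u : ℝ, 0 < u →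
      u / (1 - Real.exp (-u))
        ≤ ∑' k : ℕ, u ^ k / ((k.factorial : ℝ) * ((k + 1).factorial : ℝ)))
    ∧ ∀ (k : ℕ) (t : ℝ), 0 < t →
        0 ≤ ∫ u in Set.Ioi (0 : ℝ),
          ((∑' j : ℕ, u ^ j / ((j.factorial : ℝ) * ((j + 1).factorial : ℝ)))
            - u / (1 - Real.exp (-u))) * u ^ k * Real.exp (-t * u) := by
  refine ⟨fun u hu => div_one_sub_exp_neg_le_tsum hu, fun k t _ => ?_⟩
  refine MeasureTheory.setIntegral_nonneg measurableSet_Ioi fun u (hu : 0 < u) => ?_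
  have hdiff := sub_nonneg.mpr (div_one_sub_exp_neg_le_tsum hu)
  exact mul_nonneg (mul_nonneg hdiff (pow_nonneg hu.le k)) (exp_pos _).le
end
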